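/- arXiv:0708.3867 — 2 statements merged into one kernel-verified Lean document; each statement's English description precedes it below -/
import Mathlib

section
/- Let D be a bounded domain in ℂ, V : ℂ → ℝ a continuous function, N a positive integer, and P_n a monic polynomial of degree n satisfying ∬_D P_n(z) conj(z)^m e^{-N V(z)} d²z = 0 for all 0 ≤ m < n, and set h_n = ∬_D P_n(z) conj(z)^n e^{-N V(z)} d²z (which is real). Then the Cauchy-type transform F(z) = (1/π) ∬_D conj(P_n(ζ)) e^{-N V(ζ)} / (ζ − z) d²ζ satisfies z^{n+1} F(z) → −h_n/π as |z| → ∞; in particular F(z) · z^n = O(1/z) as |z| → ∞. -/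
open MeasureTheory Complex Filter Finset Bornology Metric Asymptotics Topology ComplexConjugate

/-!
For `ζ ≠ z`, `z^(n+1)/(ζ - z) = ζ^(n+1)/(ζ - z) - ∑_{k ≤ n} ζ^k z^(n-k)`. Integrated against
`conj(P_n) e^{-NV}` over `D`, the `k`-th moment `∬_D conj(P_n(ζ)) ζ^k e^{-NV}` is the conjugate of the
orthogonality integral, so it vanishes for `k < n` and equals the real number `h_n` for `k = n`.
Hence `π z^(n+1) F(z) = ∬_D conj(P_n(ζ)) ζ^(n+1) e^{-NV} / (ζ - z) - h_n`, and this last integral is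
`O(1/|z|)` because `D` is bounded.
-/

theorem pow_div_sub_eq_sub_geom_sum₂ {K : Type*} [Field K] {x y : K} (hxy : x ≠ y) (m : ℕ) :
    y ^ m / (x - y) = x ^ m / (x - y) - ∑ i ∈ range m, x ^ i * y ^ (m - 1 - i) := by
  have hsub : x - y ≠ 0 := sub_ne_zero.2 hxy
  rw [eq_sub_iff_add_eq, div_add' _ _ _ hsub, geom_sum₂_mul]
  ring

theorem pow_mul_integral_div_sub {μ : Measure ℂ} [NullSingletonClass μ] {g : ℂ → ℂ}
    (z : ℂ) (m : ℕ) (hmom : ∀ i < m, Integrable (fun ζ => g ζ * ζ ^ i) μ)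
    (hrem : Integrable (fun ζ => g ζ * ζ ^ m / (ζ - z)) μ) :
    z ^ m * ∫ ζ, g ζ / (ζ - z) ∂μ =
      (∫ ζ, g ζ * ζ ^ m / (ζ - z) ∂μ) -
        ∑ i ∈ range m, (∫ ζ, g ζ * ζ ^ i ∂μ) * z ^ (m - 1 - i) := by
  have hsum : Integrable (fun ζ => ∑ i ∈ range m, g ζ * ζ ^ i * z ^ (m - 1 - i)) μ :=
    integrable_finsetSum _ fun i hi => (hmom i (mem_range.1 hi)).mul_const _
  calc z ^ m * ∫ ζ, g ζ / (ζ - z) ∂μ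
      = ∫ ζ, (g ζ * ζ ^ m / (ζ - z) - ∑ i ∈ range m, g ζ * ζ ^ i * z ^ (m - 1 - i)) ∂μ := by
        rw [← integral_const_mul]
        refine integral_congr_ae ((μ.ae_ne z).mono fun ζ hζ => ?_)
        simp only [mul_assoc, ← mul_sum, mul_div_assoc, ← mul_sub,
          ← pow_div_sub_eq_sub_geom_sum₂ hζ]
        ring
    _ = _ := by
        rw [integral_sub hrem hsum, integral_finsetSum _ fun i hi =>
          (hmom i (mem_range.1 hi)).mul_const _]
        simp only [integral_mul_const]

theorem integrableOn_closedBall_div_sub {μ : Measure ℂ} [IsFiniteMeasureOnCompacts μ]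
    {f : ℂ → ℂ} (hf : Continuous f) {R : ℝ} {z : ℂ} (hz : R < ‖z‖) :
    IntegrableOn (fun ζ => f ζ / (ζ - z)) (closedBall 0 R) μ := by
  refine ContinuousOn.integrableOn_compact (isCompact_closedBall 0 R) ?_
  refine hf.continuousOn.div (continuous_id.sub continuous_const).continuousOn fun ζ hζ => ?_
  rw [mem_closedBall_zero_iff] at hζ
  exact sub_ne_zero.2 fun h => by rw [h] at hζ; linarith

theorem tendsto_setIntegral_div_sub_cobounded {μ : Measure ℂ} [IsFiniteMeasureOnCompacts μ]
    {s : Set ℂ} (hs : IsBounded s) {f : ℂ → ℂ} (hf : Continuous f) :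
    Tendsto (fun z => ∫ ζ in s, f ζ / (ζ - z) ∂μ) (cobounded ℂ) (𝓝 0) := by
  obtain ⟨R, hR⟩ := hs.exists_norm_le
  obtain ⟨M, hM⟩ := hs.isCompact_closure.exists_bound_of_continuousOn hf.continuousOn
  have hdist : Tendsto (fun z : ℂ => ‖z‖ - R) (cobounded ℂ) atTop :=
    tendsto_atTop_add_const_right _ _ tendsto_norm_cobounded_atTop
  have hbound : ∀ᶠ z in cobounded ℂ, ‖∫ ζ in s, f ζ / (ζ - z) ∂μ‖ ≤
      M * μ.real s * (‖z‖ - R)⁻¹ := by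
    filter_upwards [hdist.eventually_gt_atTop 0] with z hz
    refine (norm_setIntegral_le_of_norm_le_const (C := M / (‖z‖ - R)) hs.measure_lt_top
      fun ζ hζ => ?_).trans_eq (by ring)
    have hM0 : 0 ≤ M := (norm_nonneg _).trans (hM ζ (subset_closure hζ))
    have hgap : ‖z‖ - R ≤ ‖ζ - z‖ := by
      rw [norm_sub_rev]
      linarith [norm_sub_norm_le z ζ, hR ζ hζ]
    rw [norm_div]
    exact div_le_div₀ hM0 (hM ζ (subset_closure hζ)) hz hgap
  have hlim := (tendsto_inv_atTop_zero.comp hdist).const_mul (M * μ.real s)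
  rw [mul_zero] at hlim
  exact squeeze_zero_norm' hbound hlim

theorem isBigO_inv_of_isBigO_mul_one {𝕜 : Type*} [NormedField 𝕜] {l : Filter 𝕜} {f : 𝕜 → 𝕜}
    (hl : ∀ᶠ z in l, z ≠ 0) (h : (fun z => z * f z) =O[l] fun _ => (1 : 𝕜)) :
    f =O[l] fun z => z⁻¹ :=
  ((isBigO_refl (fun z : 𝕜 => z⁻¹) l).mul h).congr'
    (hl.mono fun z hz => by simp [inv_mul_cancel_left₀ hz]) (by simp)

theorem cauchy_transform_asymptotics_of_orthogonal_general
    (D : Set ℂ) (hD_bdd : Bornology.IsBounded D)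
    (V : ℂ → ℝ) (hV : Continuous V)
    (N : ℕ) (n : ℕ) (P : Polynomial ℂ)
    (horth : ∀ m < n,
      ∫ z in D, P.eval z * ((starRingEnd ℂ) z) ^ m * Real.exp (-(N : ℝ) * V z) = 0)
    (hn : ℝ)
    (hhn : (hn : ℂ) =
      ∫ z in D, P.eval z * ((starRingEnd ℂ) z) ^ n * Real.exp (-(N : ℝ) * V z))
    (F : ℂ → ℂ)
    (hF : ∀ z, F z = (1 / Real.pi) *
      ∫ ζ in D, (starRingEnd ℂ) (P.eval ζ) * Real.exp (-(N : ℝ) * V ζ) / (ζ - z)) :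
    Tendsto (fun z : ℂ => z ^ (n + 1) * F z) (Bornology.cobounded ℂ)
        (nhds (-(hn / Real.pi) : ℂ)) ∧
      (fun z : ℂ => F z * z ^ n) =O[Bornology.cobounded ℂ] (fun z : ℂ => z⁻¹) := by
  set w : ℂ → ℂ := fun ζ => conj (P.eval ζ) * (Real.exp (-(N : ℝ) * V ζ) : ℂ)
  have hw : Continuous w := by fun_prop
  have hintegrableOn (f : ℂ → ℂ) (hf : Continuous f) : IntegrableOn f D :=
    (hf.continuousOn.integrableOn_compact hD_bdd.isCompact_closure).mono_set subset_closure
  have hmoment (k : ℕ) : ∫ ζ in D, w ζ * ζ ^ k =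
      conj (∫ ζ in D, P.eval ζ * conj ζ ^ k * Real.exp (-(N : ℝ) * V ζ)) := by
    rw [← integral_conj]
    simp only [w, map_mul, map_pow, conj_conj, conj_ofReal]
    congr 1 with ζ
    ring
  obtain ⟨R, hR⟩ := hD_bdd.subset_closedBall 0
  have hkey : ∀ᶠ z in cobounded ℂ, z ^ (n + 1) * F z =
      (1 / Real.pi) * ((∫ ζ in D, w ζ * ζ ^ (n + 1) / (ζ - z)) - hn) := by
    filter_upwards [tendsto_norm_cobounded_atTop.eventually_gt_atTop R] with z hz
    rw [hF, mul_left_comm,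
      pow_mul_integral_div_sub z (n + 1) (fun i _ => hintegrableOn _ (by fun_prop))
      ((integrableOn_closedBall_div_sub (hw.mul (continuous_pow _)) hz).mono_set hR),
      sum_range_succ, sum_eq_zero fun i hi => by
        rw [hmoment, horth i (mem_range.1 hi), map_zero, zero_mul],
      hmoment, ← hhn, conj_ofReal]
    simp
  have hlim : Tendsto (fun z : ℂ => z ^ (n + 1) * F z) (cobounded ℂ) (𝓝 (-(hn / Real.pi))) := by
    have := ((tendsto_setIntegral_div_sub_cobounded (μ := volume) hD_bdd
      (hw.mul (continuous_pow (n + 1)))).sub_const (hn : ℂ)).const_mul (1 / Real.pi : ℂ)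
    rw [zero_sub, mul_neg, one_div_mul_eq_div] at this
    exact this.congr' (hkey.mono fun z hz => hz.symm)
  refine ⟨hlim, isBigO_inv_of_isBigO_mul_one (eventually_ne_cobounded 0) ?_⟩
  exact (hlim.isBigO_one ℂ).congr_left fun z => by ring

/-- If the monic polynomial `P_n` of degree `n` is orthogonal to
`conj(z)^m` for all `m < n` (with respect to `e^{-N V} χ_D d²z`) and
`h_n = ∬_D P_n(z) conj(z)^n e^{-N V(z)} d²z` (real), then the Cauchy-type transform
`F z = (1/π) ∬_D conj (P_n ζ) e^{-N V ζ}/(ζ − z) d²ζ` satisfies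
`z^{n+1} F z → −h_n/π` as `|z| → ∞`; in particular `F z * z^n = O(1/z)`. -/
theorem cauchy_transform_asymptotics_of_orthogonal
    (D : Set ℂ) (hD_open : IsOpen D) (hD_conn : IsConnected D)
    (hD_bdd : Bornology.IsBounded D)
    (V : ℂ → ℝ) (hV : Continuous V)
    (N : ℕ) (hN : 0 < N)
    (n : ℕ) (P : Polynomial ℂ) (hmonic : P.Monic) (hdeg : P.natDegree = n)
    (horth : ∀ m < n,
      ∫ z in D, P.eval z * ((starRingEnd ℂ) z) ^ m * Real.exp (-(N : ℝ) * V z) = 0)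
    (hn : ℝ)
    (hhn : (hn : ℂ) =
      ∫ z in D, P.eval z * ((starRingEnd ℂ) z) ^ n * Real.exp (-(N : ℝ) * V z))
    (F : ℂ → ℂ)
    (hF : ∀ z, F z = (1 / Real.pi) *
      ∫ ζ in D, (starRingEnd ℂ) (P.eval ζ) * Real.exp (-(N : ℝ) * V ζ) / (ζ - z)) :
    Tendsto (fun z : ℂ => z ^ (n + 1) * F z) (Bornology.cobounded ℂ)
        (nhds (-(hn / Real.pi) : ℂ)) ∧
      (fun z : ℂ => F z * z ^ n) =O[Bornology.cobounded ℂ] (fun z : ℂ => z⁻¹) :=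
  cauchy_transform_asymptotics_of_orthogonal_general D hD_bdd V hV N n P horth hn hhn F hF
end

section
/- Let D be a bounded domain in ℂ, V : ℂ → ℝ a continuous function, N a positive integer, and P a polynomial of degree at most n. If the Cauchy-type transform F(z) = (1/π) ∬_D conj(P(ζ)) e^{-N V(ζ)} / (ζ − z) d²ζ satisfies F(z) = O(z^{−n−1}) as |z| → ∞ (i.e., |z^{n+1} F(z)| is bounded for all sufficiently large |z|), then ∬_D P(z) conj(z)^m e^{-N V(z)} d²z = 0 for all 0 ≤ m < n. -/
/-!
Write `C[g] z = ∫ g ζ / (ζ - z) dμ(ζ)` for a measure supported in a disc. The geometric sum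
`ζ^{m+1} - z^{m+1} = (ζ - z) ∑_{i ≤ m} ζ^i z^{m-i}` gives
`C[g ζ^{m+1}] z = z^{m+1} C[g] z + ∑_{i ≤ m} z^{m-i} ∫ g ζ^i dμ`.
Every Cauchy transform of this kind tends to `0` at infinity, and if `C[g] = O(z^{-n-1})` so
does `z^{m+1} C[g]` for `m < n`. By induction on `m`, once the moments below `m` vanish the
expansion leaves only the constant `∫ g ζ^m dμ`, which is therefore `0`. For the theorem,
`g = conj P · e^{-NV}` on `D`, whose moments are the conjugates of the integrals in question.
-/

open MeasureTheory Complex Filter Topology Bornology Finset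

theorem tendsto_pow_mul_nhds_zero_of_isBoundedUnder {𝕜 : Type*} [NormedField 𝕜] {F : 𝕜 → 𝕜}
    {m n : ℕ} (hmn : m < n)
    (hF : IsBoundedUnder (· ≤ ·) (cobounded 𝕜) fun z => ‖z ^ n * F z‖) :
    Tendsto (fun z => z ^ m * F z) (cobounded 𝕜) (𝓝 0) := by
  have hinv : Tendsto (fun z : 𝕜 => (z ^ (n - m))⁻¹) (cobounded 𝕜) (𝓝 0) :=
    tendsto_inv₀_cobounded.comp (tendsto_pow_cobounded_cobounded (by omega))
  refine (isBoundedUnder_le_mul_tendsto_zero hF hinv).congr' ?_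
  filter_upwards [eventually_ne_cobounded 0] with z hz
  rw [← Nat.add_sub_of_le hmn.le, pow_add, Nat.add_sub_cancel_left]
  field_simp

theorem norm_inv_sub_le_two_div_norm {r : ℝ} {ζ z : ℂ} (hζ : ‖ζ‖ ≤ r) (hz : 2 * r ≤ ‖z‖) :
    ‖(ζ - z)⁻¹‖ ≤ 2 / ‖z‖ := by
  rcases (norm_nonneg z).eq_or_lt with hz0 | hz0
  · have hζ0 : ‖ζ‖ = 0 := by linarith [norm_nonneg ζ]
    simp [norm_eq_zero.1 hζ0, norm_eq_zero.1 hz0.symm]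
  · have hsub : ‖z‖ / 2 ≤ ‖ζ - z‖ := by
      have := norm_sub_norm_le z ζ; rw [norm_sub_rev] at this; linarith
    rw [norm_inv, ← inv_div]
    exact inv_anti₀ (by positivity) hsub

theorem mul_pow_succ_div_sub {ζ z : ℂ} (h : ζ ≠ z) (a : ℂ) (m : ℕ) :
    a * ζ ^ (m + 1) / (ζ - z) =
      z ^ (m + 1) * (a / (ζ - z)) + ∑ i ∈ range (m + 1), z ^ (m - i) * (a * ζ ^ i) := by
  have hgeom := geom_sum₂_mul ζ z (m + 1)
  simp only [Nat.add_sub_cancel] at hgeom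
  have hsum : ∑ i ∈ range (m + 1), z ^ (m - i) * (a * ζ ^ i) =
      a * ∑ i ∈ range (m + 1), ζ ^ i * z ^ (m - i) := by
    rw [mul_sum]; exact sum_congr rfl fun i _ => by ring
  rw [hsum]
  field_simp [sub_ne_zero.mpr h]
  linear_combination (-a) * hgeom

/-- The Cauchy transform, without the normalising factor `1/π`. -/
noncomputable def cauchyTransform (μ : Measure ℂ) (g : ℂ → ℂ) (z : ℂ) : ℂ :=
  ∫ ζ, g ζ / (ζ - z) ∂μ

namespace cauchyTransform

variable {μ : Measure ℂ} {g : ℂ → ℂ} {r : ℝ}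

theorem integrable_mul_pow (hg : Integrable g μ) (hr : ∀ᵐ ζ ∂μ, ‖ζ‖ ≤ r) (k : ℕ) :
    Integrable (fun ζ => g ζ * ζ ^ k) μ :=
  hg.mul_bdd (continuous_pow k).aestronglyMeasurable <| hr.mono fun ζ hζ => by
    rw [norm_pow]; exact pow_le_pow_left₀ (norm_nonneg ζ) hζ k

theorem integrable_div_sub (hg : Integrable g μ) (hr : ∀ᵐ ζ ∂μ, ‖ζ‖ ≤ r) {z : ℂ}
    (hz : 2 * r ≤ ‖z‖) : Integrable (fun ζ => g ζ / (ζ - z)) μ :=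
  hg.mul_bdd (measurable_id.sub_const z).inv.aestronglyMeasurable <|
    hr.mono fun _ hζ => norm_inv_sub_le_two_div_norm hζ hz

theorem norm_le (hg : Integrable g μ) (hr : ∀ᵐ ζ ∂μ, ‖ζ‖ ≤ r) {z : ℂ} (hz : 2 * r ≤ ‖z‖) :
    ‖cauchyTransform μ g z‖ ≤ 2 / ‖z‖ * ∫ ζ, ‖g ζ‖ ∂μ := by
  rw [← integral_const_mul]
  refine norm_integral_le_of_norm_le (hg.norm.const_mul _) (hr.mono fun ζ hζ => ?_)
  rw [div_eq_mul_inv, norm_mul, mul_comm]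
  exact mul_le_mul_of_nonneg_right (norm_inv_sub_le_two_div_norm hζ hz) (norm_nonneg _)

theorem tendsto_cobounded (hg : Integrable g μ) (hr : ∀ᵐ ζ ∂μ, ‖ζ‖ ≤ r) :
    Tendsto (cauchyTransform μ g) (cobounded ℂ) (𝓝 0) := by
  have hbound : Tendsto (fun z : ℂ => 2 / ‖z‖ * ∫ ζ, ‖g ζ‖ ∂μ) (cobounded ℂ) (𝓝 0) := by
    simpa using ((tendsto_const_nhds (x := (2 : ℝ))).div_atTop
      tendsto_norm_cobounded_atTop).mul_const (∫ ζ, ‖g ζ‖ ∂μ)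
  refine squeeze_zero_norm' ?_ hbound
  filter_upwards [tendsto_norm_cobounded_atTop.eventually_ge_atTop (2 * r)] with z hz
  exact norm_le hg hr hz

theorem mul_pow_succ_eq (hg : Integrable g μ) (hr : ∀ᵐ ζ ∂μ, ‖ζ‖ ≤ r) {z : ℂ} (hz : 2 * r < ‖z‖)
    (m : ℕ) :
    cauchyTransform μ (fun ζ => g ζ * ζ ^ (m + 1)) z =
      z ^ (m + 1) * cauchyTransform μ g z +
        ∑ i ∈ range (m + 1), z ^ (m - i) * ∫ ζ, g ζ * ζ ^ i ∂μ := by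
  have hne : ∀ᵐ ζ ∂μ, ζ ≠ z := hr.mono fun ζ hζ hζz => by
    subst hζz; linarith [norm_nonneg ζ]
  unfold cauchyTransform
  rw [integral_congr_ae (hne.mono fun ζ h => mul_pow_succ_div_sub h (g ζ) m),
    integral_add ((integrable_div_sub hg hr hz.le).const_mul _)
      (integrable_finsetSum _ fun i _ => (integrable_mul_pow hg hr i).const_mul _),
    integral_const_mul, integral_finsetSum _ fun i _ => (integrable_mul_pow hg hr i).const_mul _]
  simp only [integral_const_mul]

theorem integral_mul_pow_eq_zero (hg : Integrable g μ) (hr : ∀ᵐ ζ ∂μ, ‖ζ‖ ≤ r) {n : ℕ}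
    (hdecay : IsBoundedUnder (· ≤ ·) (cobounded ℂ)
      fun z => ‖z ^ (n + 1) * cauchyTransform μ g z‖) :
    ∀ m < n, ∫ ζ, g ζ * ζ ^ m ∂μ = 0 := by
  intro m
  induction m using Nat.strong_induction_on with
  | _ m ih =>
  intro hmn
  have hexp : ∀ᶠ z in cobounded ℂ,
      cauchyTransform μ (fun ζ => g ζ * ζ ^ (m + 1)) z - z ^ (m + 1) * cauchyTransform μ g z =
        ∫ ζ, g ζ * ζ ^ m ∂μ := by
    filter_upwards [tendsto_norm_cobounded_atTop.eventually_gt_atTop (2 * r)] with z hz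
    rw [mul_pow_succ_eq hg hr hz, add_sub_cancel_left, sum_range_succ, Nat.sub_self, pow_zero,
      one_mul, add_eq_right]
    exact sum_eq_zero fun i hi => by
      rw [ih i (mem_range.1 hi) ((mem_range.1 hi).trans hmn), mul_zero]
  have hlim := (tendsto_cobounded (integrable_mul_pow hg hr (m + 1)) hr).sub
    (tendsto_pow_mul_nhds_zero_of_isBoundedUnder (Nat.succ_lt_succ hmn) hdecay)
  rw [sub_zero] at hlim
  exact tendsto_const_nhds_iff.mp (hlim.congr' hexp)

end cauchyTransform

open cauchyTransform in
theorem orthogonality_of_cauchy_transform_decay_general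
    (D : Set ℂ) (hD_open : IsOpen D)
    (hD_bdd : Bornology.IsBounded D)
    (V : ℂ → ℝ) (hV : Continuous V)
    (N : ℕ)
    (n : ℕ) (P : Polynomial ℂ)
    (F : ℂ → ℂ)
    (hF : ∀ z, F z = (1 / Real.pi) *
      ∫ ζ in D, (starRingEnd ℂ) (P.eval ζ) * Real.exp (-(N : ℝ) * V ζ) / (ζ - z))
    (hbound : ∃ C R : ℝ, ∀ z : ℂ, R < ‖z‖ →
      ‖z ^ (n + 1) * F z‖ ≤ C) :
    ∀ m < n,
      ∫ z in D, P.eval z * ((starRingEnd ℂ) z) ^ m * Real.exp (-(N : ℝ) * V z) = 0 := by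
  set g : ℂ → ℂ := fun ζ => (starRingEnd ℂ) (P.eval ζ) * Real.exp (-(N : ℝ) * V ζ)
  obtain ⟨r, hr⟩ := hD_bdd.subset_closedBall 0
  have hr_ae : ∀ᵐ ζ ∂volume.restrict D, ‖ζ‖ ≤ r :=
    ae_restrict_of_forall_mem hD_open.measurableSet fun ζ hζ => mem_closedBall_zero_iff.1 (hr hζ)
  have hg : IntegrableOn g D :=
    ((by fun_prop : Continuous g).continuousOn.integrableOn_compact
      hD_bdd.isCompact_closure).mono_set subset_closure
  have hdecay : IsBoundedUnder (· ≤ ·) (cobounded ℂ)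
      fun z => ‖z ^ (n + 1) * cauchyTransform (volume.restrict D) g z‖ := by
    obtain ⟨C, R, hCR⟩ := hbound
    refine isBoundedUnder_of_eventually_le (a := Real.pi * C) ?_
    filter_upwards [tendsto_norm_cobounded_atTop.eventually_gt_atTop R] with z hz
    have hFz : cauchyTransform (volume.restrict D) g z = Real.pi * F z := by
      rw [hF, ← mul_assoc, mul_one_div_cancel (ofReal_ne_zero.2 Real.pi_ne_zero), one_mul]
      rfl
    rw [hFz, mul_left_comm, norm_mul, norm_real, Real.norm_of_nonneg Real.pi_pos.le]
    exact mul_le_mul_of_nonneg_left (hCR z hz) Real.pi_pos.le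
  intro m hm
  calc ∫ z in D, P.eval z * (starRingEnd ℂ) z ^ m * Real.exp (-(N : ℝ) * V z)
      = (starRingEnd ℂ) (∫ ζ in D, g ζ * ζ ^ m) := by
        rw [← integral_conj]
        congr 1 with z
        simp only [g, map_mul, map_pow, conj_conj, conj_ofReal]
        ring
    _ = 0 := by rw [integral_mul_pow_eq_zero hg hr_ae hdecay m hm, map_zero]

/-- If `P` has degree at most `n` and its Cauchy-type transform
`F z = (1/π) ∬_D conj (P ζ) e^{-N V ζ} / (ζ − z) d²ζ` satisfies `F z = O(z^{−n−1})` as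
`|z| → ∞` (i.e. `|z^{n+1} F z|` is bounded for all sufficiently large `|z|`), then
`∬_D P(z) conj(z)^m e^{-N V(z)} d²z = 0` for all `0 ≤ m < n`. -/
theorem orthogonality_of_cauchy_transform_decay
    (D : Set ℂ) (hD_open : IsOpen D) (hD_conn : IsConnected D)
    (hD_bdd : Bornology.IsBounded D)
    (V : ℂ → ℝ) (hV : Continuous V)
    (N : ℕ) (hN : 0 < N)
    (n : ℕ) (P : Polynomial ℂ) (hdeg : P.natDegree ≤ n)
    (F : ℂ → ℂ)
    (hF : ∀ z, F z = (1 / Real.pi) *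
      ∫ ζ in D, (starRingEnd ℂ) (P.eval ζ) * Real.exp (-(N : ℝ) * V ζ) / (ζ - z))
    (hbound : ∃ C R : ℝ, ∀ z : ℂ, R < ‖z‖ →
      ‖z ^ (n + 1) * F z‖ ≤ C) :
    ∀ m < n,
      ∫ z in D, P.eval z * ((starRingEnd ℂ) z) ^ m * Real.exp (-(N : ℝ) * V z) = 0 :=
  orthogonality_of_cauchy_transform_decay_general D hD_open hD_bdd V hV N n P F hF hbound
end
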